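/- Let Ω be a set, 𝓛_R a closed linear subspace of 𝓛 containing all constant gambles, and Σ⁺ ⊆ 𝓛⁺_R a closed convex cone containing all nonnegative constant gambles; let Σ⁻ denote the interior (relative to 𝓛_R) of −Σ⁺. Then the following are equivalent: (a) there exist a P-coherent set C ⊆ 𝓛_R and a gamble g ∈ C with sup g < 0 and g ∉ Σ⁻; (b) Σ⁺ is a proper subset of 𝓛⁺_R. -/

import Mathlib

/-- `posi A`: the set of all finite nonnegative linear combinations of elements of `A`. -/
def posi {E : Type*} [AddCommMonoid E] [Module ℝ E] (A : Set E) : Set E :=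
  {g | ∃ (k : ℕ) (c : Fin k → ℝ) (f : Fin k → E),
    (∀ i, 0 ≤ c i) ∧ (∀ i, f i ∈ A) ∧ g = ∑ i, c i • f i}

/-- The nonnegative gambles `𝓛⁺ = {g : inf g ≥ 0}`. -/
def Lpos (Ω : Type*) [TopologicalSpace Ω] : Set (BoundedContinuousFunction Ω ℝ) :=
  {g | 0 ≤ ⨅ ω, g ω}

/-- The P-negative gambles `Σ⁻` : the interior of `−Σ⁺` relative to the subspace `𝓛_R`,
described via the metric: `g ∈ Σ⁻` iff `g ∈ 𝓛_R` and some ball around `g` intersected with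
`𝓛_R` is contained in `−Σ⁺`. -/
def SigmaNeg {Ω : Type*} [TopologicalSpace Ω]
    (LR : Submodule ℝ (BoundedContinuousFunction Ω ℝ))
    (Sp : Set (BoundedContinuousFunction Ω ℝ)) : Set (BoundedContinuousFunction Ω ℝ) :=
  {g | g ∈ LR ∧ ∃ ε : ℝ, 0 < ε ∧ ∀ h ∈ LR, ‖h - g‖ < ε → -h ∈ Sp}

set_option maxHeartbeats 1000000 in
/-- there exists a P-coherent set `C ⊆ 𝓛_R` containing a negative gamble that
is not P-negative iff `Σ⁺` is a proper subset of `𝓛⁺_R`. -/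
theorem statement4 (Ω : Type*) [TopologicalSpace Ω] [DiscreteTopology Ω]
    (LR : Submodule ℝ (BoundedContinuousFunction Ω ℝ))
    (hLRclosed : IsClosed (LR : Set (BoundedContinuousFunction Ω ℝ)))
    (hLRconst : ∀ c : ℝ, BoundedContinuousFunction.const Ω c ∈ LR)
    (Sp : Set (BoundedContinuousFunction Ω ℝ))
    (hSp : Sp ⊆ Lpos Ω ∩ (LR : Set (BoundedContinuousFunction Ω ℝ)))
    (hclosed : IsClosed Sp) (hconvex : Convex ℝ Sp)
    (hcone : ∀ c : ℝ, 0 ≤ c → ∀ g ∈ Sp, c • g ∈ Sp)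
    (hconsts : ∀ c : ℝ, 0 ≤ c → BoundedContinuousFunction.const Ω c ∈ Sp) :
    (∃ C : Set (BoundedContinuousFunction Ω ℝ),
        C ⊆ (LR : Set (BoundedContinuousFunction Ω ℝ)) ∧
        IsClosed C ∧ Convex ℝ C ∧ (∀ c : ℝ, 0 ≤ c → ∀ g ∈ C, c • g ∈ C) ∧
        Sp ⊆ C ∧ C ∩ SigmaNeg LR Sp = ∅ ∧
        ∃ g ∈ C, (⨆ ω, g ω) < 0 ∧ g ∉ SigmaNeg LR Sp) ↔
      Sp ⊂ Lpos Ω ∩ (LR : Set (BoundedContinuousFunction Ω ℝ)) := by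
  constructor
  · -- forward: coherent C with negative non-P-negative gamble ⇒ Sp proper
    rintro ⟨C, hCLR, -, -, -, hSpC, hdisj, g, hgC, hgsup, hgns⟩
    refine ⟨fun x hx => hSp hx, fun hcontra => ?_⟩
    -- otherwise Sp = Lpos ∩ LR and g would be in SigmaNeg
    have hΩ : Nonempty Ω := by
      by_contra h
      rw [not_nonempty_iff] at h
      rw [iSup_of_empty' (fun ω => g ω), Real.sSup_empty] at hgsup
      exact lt_irrefl 0 hgsup
    apply hgns
    refine ⟨hCLR hgC, -(⨆ ω, g ω), by linarith, fun h hhLR hnorm => ?_⟩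
    apply hcontra
    refine ⟨?_, by exact neg_mem hhLR⟩
    have hb : ∀ ω, (-h) ω ≥ 0 := by
      intro ω
      have h1 : g ω ≤ ⨆ ω, g ω := le_ciSup g.isBounded_range.bddAbove ω
      have h2 : (h - g) ω ≤ ‖h - g‖ :=
        (abs_le.mp ((h - g).norm_coe_le_norm ω)).2
      simp only [BoundedContinuousFunction.coe_sub, Pi.sub_apply] at h2
      simp only [BoundedContinuousFunction.coe_neg, Pi.neg_apply]
      nlinarith
    exact le_ciInf hb
  · -- backward: Sp proper ⇒ construct half-space C
    rintro ⟨-, hne⟩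
    rw [Set.not_subset] at hne
    obtain ⟨f, hfmem, hfSp⟩ := hne
    obtain ⟨hfL, hfLR⟩ := hfmem
    have hzSp : (0 : BoundedContinuousFunction Ω ℝ) ∈ Sp := by
      have := hconsts 0 le_rfl
      convert this using 1; ext ω; simp
    have hΩ : Nonempty Ω := by
      by_contra h
      rw [not_nonempty_iff] at h
      have hf0 : f = 0 := by ext ω; exact (h.false ω).elim
      exact hfSp (hf0 ▸ hzSp)
    -- separate f from Sp
    obtain ⟨L₀, u, hlt, hu⟩ := geometric_hahn_banach_closed_point hconvex hclosed hfSp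
    set L : BoundedContinuousFunction Ω ℝ →L[ℝ] ℝ := -L₀ with hL
    have hLSp : ∀ a ∈ Sp, -u < L a := by
      intro a ha; simpa [hL] using neg_lt_neg (hlt a ha)
    have hupos : 0 < u := by
      have := hLSp 0 hzSp; simp [hL] at this; linarith
    have hLf : L f < -u := by simp [hL]; linarith
    have hLfneg : L f < 0 := by linarith
    -- L is nonnegative on Sp
    have hLnn : ∀ a ∈ Sp, 0 ≤ L a := by
      intro a ha
      by_contra hneg
      push_neg at hneg
      have hc : (0:ℝ) ≤ u / (-L a) := le_of_lt (div_pos hupos (by linarith))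
      have := hLSp _ (hcone _ hc a ha)
      rw [map_smul, smul_eq_mul] at this
      have : u / (-L a) * L a = -u := by
        rw [div_mul_eq_mul_div, div_neg, mul_div_assoc, div_self hneg.ne, mul_one]
      nlinarith [hLSp _ (hcone _ hc a ha), map_smul L (u / (-L a)) a]
    -- the half space C
    refine ⟨{h | h ∈ LR ∧ 0 ≤ L h}, fun x hx => hx.1, ?_, ?_, ?_, ?_, ?_, ?_⟩
    · exact hLRclosed.inter (isClosed_le continuous_const L.continuous)
    · intro x hx y hy a b ha hb hab
      exact ⟨LR.add_mem (LR.smul_mem a hx.1) (LR.smul_mem b hy.1),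
        by simp only [map_add, map_smul, smul_eq_mul]; nlinarith [hx.2, hy.2]⟩
    · intro c hc x hx
      exact ⟨LR.smul_mem c hx.1, by rw [map_smul, smul_eq_mul]; exact mul_nonneg hc hx.2⟩
    · intro a ha; exact ⟨(hSp ha).2, hLnn a ha⟩
    · -- disjoint from SigmaNeg
      ext x
      simp only [Set.mem_inter_iff, Set.mem_empty_iff_false, iff_false, not_and]
      rintro ⟨hxLR, hxL⟩ ⟨-, ε', hε', hball⟩
      set δ : ℝ := ε' / (‖f‖ + 1) with hδ
      have hδpos : 0 < δ := div_pos hε' (by positivity)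
      have hmem : -(x - δ • f) ∈ Sp := by
        apply hball _ (LR.sub_mem hxLR (LR.smul_mem δ hfLR))
        have : ‖x - δ • f - x‖ = δ * ‖f‖ := by
          have h9 : x - δ • f - x = -(δ • f) := sub_sub_cancel_left x (δ • f)
          have h10 : ‖δ • f‖ = ‖δ‖ * ‖f‖ := norm_smul δ f
          rw [h9, norm_neg, h10, Real.norm_eq_abs, abs_of_pos hδpos]
        rw [this, hδ]
        rw [div_mul_eq_mul_div, div_lt_iff₀ (by positivity)]
        nlinarith [norm_nonneg f]
      have := hLnn _ hmem
      simp only [map_neg, map_sub, map_smul, smul_eq_mul] at this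
      nlinarith
    · -- the negative gamble g := -f - ε
      have hL1 : 0 ≤ L (BoundedContinuousFunction.const Ω 1) :=
        hLnn _ (hconsts 1 zero_le_one)
      set L1 : ℝ := L (BoundedContinuousFunction.const Ω 1) with hL1def
      set ε : ℝ := -L f / (2 * (L1 + 1)) with hε
      have hεpos : 0 < ε := div_pos (by linarith) (by linarith)
      set g : BoundedContinuousFunction Ω ℝ :=
        -f - BoundedContinuousFunction.const Ω ε with hg
      have hconstsmul : BoundedContinuousFunction.const Ω ε
          = ε • BoundedContinuousFunction.const Ω 1 := by
        ext ω; simp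
      have hLg : 0 ≤ L g := by
        have : L g = -L f - ε * L1 := by
          rw [hg, map_sub, map_neg, hconstsmul, map_smul, smul_eq_mul]
        rw [this]
        have : ε * L1 ≤ ε * (L1 + 1) := by nlinarith
        have h2 : ε * (L1 + 1) = -L f / 2 := by rw [hε]; field_simp
        linarith
      have hgLR : g ∈ LR := by
        rw [hg]; exact LR.sub_mem (LR.neg_mem hfLR) (hLRconst ε)
      refine ⟨g, ⟨hgLR, hLg⟩, ?_, ?_⟩
      · have hb : ∀ ω, g ω ≤ -ε := by
          intro ω
          have h1 : 0 ≤ f ω := by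
            have := ciInf_le f.isBounded_range.bddBelow ω
            exact le_trans hfL this
          simp [hg]; linarith
        calc (⨆ ω, g ω) ≤ -ε := ciSup_le hb
          _ < 0 := by linarith
      · rintro ⟨-, ε', hε', hball⟩
        -- same contradiction as disjointness
        set δ : ℝ := ε' / (‖f‖ + 1) with hδ
        have hδpos : 0 < δ := div_pos hε' (by positivity)
        have hmem : -(g - δ • f) ∈ Sp := by
          apply hball _ (LR.sub_mem hgLR (LR.smul_mem δ hfLR))
          have : ‖g - δ • f - g‖ = δ * ‖f‖ := by
            have h9 : g - δ • f - g = -(δ • f) := sub_sub_cancel_left g (δ • f)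
            have h10 : ‖δ • f‖ = ‖δ‖ * ‖f‖ := norm_smul δ f
            rw [h9, norm_neg, h10, Real.norm_eq_abs, abs_of_pos hδpos]
          rw [this, hδ]
          rw [div_mul_eq_mul_div, div_lt_iff₀ (by positivity)]
          nlinarith [norm_nonneg f]
        have := hLnn _ hmem
        simp only [map_neg, map_sub, map_smul, smul_eq_mul] at this
        nlinarith
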